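/- arXiv:1905.01066 — 5 statements merged into one kernel-verified Lean document; each statement's English description precedes it below -/
import Mathlib

section
/- Suppose additionally that ι : V → H is a compact operator with dense range. Let u : ℕ → V be a sequence with u⁰ ≠ 0 and uʲ ≠ 0 for all j, satisfying the inverse power iteration: for all j ≥ 1 and all v ∈ V, a_β(uʲ, v) = μ(u^{j−1}) · ( ι u^{j−1} / ‖ι u^{j−1}‖_H , ι v )_H. Then the sequence of Rayleigh quotients μ(uʲ) converges to some real μ⋆ > 0, and there exist u⋆ ∈ V and a strictly increasing map φ : ℕ → ℕ such that u^{φ(j)} → u⋆ in the norm of V, ‖ι u⋆‖_H = 1, and a(u⋆, v) = (μ⋆ − β)·(ι u⋆, ι v)_H for all v ∈ V; that is, (u⋆, μ⋆ − β) is an eigenpair of the problem a(u,v) = λ (ι u, ι v)_H. -/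
/-!
Write `b = a_β`, `μⱼ = μ(uⱼ)` and `nⱼ = ‖ι uⱼ‖`. Testing the iteration with `v = uⱼ₊₁` and with
`v = uⱼ`, and applying Cauchy–Schwarz to the Hermitian positive form `b`, gives
`μⱼ ≤ b(uⱼ₊₁, uⱼ₊₁) ≤ μⱼ nⱼ₊₁`. Hence `nⱼ₊₁ ≥ 1` and `μⱼ₊₁ nⱼ₊₁ ≤ μⱼ`, so the Rayleigh quotients
decrease to a limit `μ⋆ ≥ α / ‖ι‖² > 0`, `nⱼ₊₁ → 1`, and `ι uⱼ₊₁ - ι uⱼ / nⱼ → 0`.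
The vectors `uⱼ / nⱼ` are bounded in `V` by coercivity, so compactness of `ι` gives a subsequence
along which `ι uⱼ / nⱼ → ω` with `‖ω‖ = 1`. Along it `uⱼ₊₁` solves `b(uⱼ₊₁, ·) = (μⱼ ι uⱼ / nⱼ, ι ·)_H`
with convergent data, so coercivity makes `uⱼ₊₁` Cauchy in `V`; its limit `u⋆` has `ι u⋆ = ω`
and passing to the limit in the iteration gives `b(u⋆, ·) = μ⋆ (ι u⋆, ι ·)_H`.
-/

open Filter Topology
open scoped ComplexConjugate InnerProductSpace

theorem IsCompactOperator.exists_tendsto_subseq {𝕜₁ 𝕜₂ M₁ M₂ : Type*}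
    [NontriviallyNormedField 𝕜₁] [SeminormedRing 𝕜₂] {σ₁₂ : 𝕜₁ →+* 𝕜₂}
    [SeminormedAddCommGroup M₁] [NormedSpace 𝕜₁ M₁]
    [SeminormedAddCommGroup M₂] [Module 𝕜₂ M₂] [ContinuousConstSMul 𝕜₂ M₂]
    {f : M₁ →ₛₗ[σ₁₂] M₂} (hf : IsCompactOperator f) {x : ℕ → M₁} {R : ℝ}
    (hx : ∀ j, ‖x j‖ ≤ R) :
    ∃ y, ∃ ψ : ℕ → ℕ, StrictMono ψ ∧ Tendsto (fun j => f (x (ψ j))) atTop (𝓝 y) := by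
  obtain ⟨K, hK, hfK⟩ := hf.image_closedBall_subset_compact R
  obtain ⟨y, -, ψ, hψ, hlim⟩ :=
    hK.tendsto_subseq fun j => hfK ⟨x j, mem_closedBall_zero_iff.2 (hx j), rfl⟩
  exact ⟨y, ψ, hψ, hlim⟩

namespace LinearMap

variable {E : Type*} [AddCommGroup E] [Module ℂ E]

def reBilin (b : E →ₗ⋆[ℂ] E →ₗ[ℂ] ℂ) : LinearMap.BilinForm ℝ E :=
  LinearMap.mk₂ ℝ (fun x y => (b x y).re) (fun _ _ _ => by simp)
    (fun c x y => by rw [← Complex.coe_smul, map_smulₛₗ₂]; simp)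
    (fun _ _ _ => by simp) (fun _ _ _ => by simp)

theorem re_apply_sq_le_of_isSymm {b : E →ₗ⋆[ℂ] E →ₗ[ℂ] ℂ} (hb : b.IsSymm)
    (hpos : ∀ x, 0 ≤ (b x x).re) (x y : E) : (b x y).re ^ 2 ≤ (b x x).re * (b y y).re :=
  b.reBilin.apply_sq_le_of_symm hpos ⟨fun x y => by simp [reBilin, ← hb.eq x y]⟩ x y

end LinearMap

section CoerciveForm

variable {V H : Type*} [NormedAddCommGroup V] [InnerProductSpace ℂ V]
  [NormedAddCommGroup H] [InnerProductSpace ℂ H]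

noncomputable def rayleigh (b : V →ₗ⋆[ℂ] V →ₗ[ℂ] ℂ) (ι : V →L[ℂ] H) (x : V) : ℝ :=
  (b x x).re / ‖ι x‖ ^ 2

variable {b : V →ₗ⋆[ℂ] V →ₗ[ℂ] ℂ} {ι : V →L[ℂ] H} {α : ℝ}

theorem mul_norm_le_of_apply_eq_inner (hcoer : ∀ x, α * ‖x‖ ^ 2 ≤ (b x x).re) {x : V} {f : H}
    (hx : ∀ v, b x v = ⟪f, ι v⟫_ℂ) : α * ‖x‖ ≤ ‖ι‖ * ‖f‖ := by
  rcases (norm_nonneg x).eq_or_lt with hx0 | hx0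
  · rw [← hx0, mul_zero]
    positivity
  refine le_of_mul_le_mul_right ?_ hx0
  calc α * ‖x‖ * ‖x‖ = α * ‖x‖ ^ 2 := by ring
    _ ≤ (b x x).re := hcoer x
    _ = (⟪f, ι x⟫_ℂ).re := by rw [hx]
    _ ≤ ‖f‖ * ‖ι x‖ := re_inner_le_norm (𝕜 := ℂ) f (ι x)
    _ ≤ ‖ι‖ * ‖f‖ * ‖x‖ := by nlinarith [ι.le_opNorm x, norm_nonneg f]

theorem cauchySeq_of_apply_eq_inner (hα : 0 < α) (hcoer : ∀ x, α * ‖x‖ ^ 2 ≤ (b x x).re)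
    {x : ℕ → V} {f : ℕ → H} (hx : ∀ j v, b (x j) v = ⟪f j, ι v⟫_ℂ) (hf : CauchySeq f) : CauchySeq x := by
  have hdist : ∀ j k, dist (x j) (x k) ≤ ‖ι‖ / α * dist (f j) (f k) := fun j k => by
    rw [dist_eq_norm, dist_eq_norm, div_mul_eq_mul_div, le_div_iff₀ hα, mul_comm]
    exact mul_norm_le_of_apply_eq_inner hcoer fun v => by
      rw [map_sub, LinearMap.sub_apply, hx, hx, inner_sub_left]
  obtain ⟨d, hd0, hd, hdlim⟩ := cauchySeq_iff_le_tendsto_0.1 hf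
  refine cauchySeq_iff_le_tendsto_0.2
    ⟨fun N => ‖ι‖ / α * d N, fun N => ?_, fun j k N hj hk => ?_, ?_⟩
  · exact mul_nonneg (by positivity) (hd0 N)
  · exact (hdist j k).trans (mul_le_mul_of_nonneg_left (hd j k N hj hk) (by positivity))
  · simpa using hdlim.const_mul (‖ι‖ / α)

theorem apply_eq_inner_of_tendsto (hcont : ∀ v, Continuous fun x => b x v) {x : ℕ → V}
    {f : ℕ → H} {x₀ : V} {f₀ : H} (hx : ∀ j v, b (x j) v = ⟪f j, ι v⟫_ℂ) (hxlim : Tendsto x atTop (𝓝 x₀))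
    (hflim : Tendsto f atTop (𝓝 f₀)) (v : V) : b x₀ v = ⟪f₀, ι v⟫_ℂ :=
  tendsto_nhds_unique ((hcont v).continuousAt.tendsto.comp hxlim)
    ((hflim.inner tendsto_const_nhds).congr fun j => (hx j v).symm)

theorem re_apply_self_pos_of_coercive (hα : 0 < α)
    (hcoer : ∀ x, α * ‖x‖ ^ 2 ≤ (b x x).re) {x : V} (hx : x ≠ 0) : 0 < (b x x).re :=
  (mul_pos hα (pow_pos (norm_pos_iff.2 hx) 2)).trans_le (hcoer x)

theorem re_apply_self_eq_rayleigh_mul {x : V} (hx : ι x ≠ 0) :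
    (b x x).re = rayleigh b ι x * ‖ι x‖ ^ 2 := by
  rw [rayleigh, div_mul_cancel₀ _ (by positivity)]

theorem rayleigh_pos (hpos : ∀ x, x ≠ 0 → 0 < (b x x).re) {x : V} (hx : ι x ≠ 0) :
    0 < rayleigh b ι x :=
  div_pos (hpos x (by rintro rfl; simp at hx)) (by positivity)

theorem le_rayleigh_mul_opNorm_sq (hα : 0 < α) (hcoer : ∀ x, α * ‖x‖ ^ 2 ≤ (b x x).re)
    {x : V} (hx : ι x ≠ 0) : α ≤ rayleigh b ι x * ‖ι‖ ^ 2 := by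
  have hx0 : 0 < ‖x‖ := norm_pos_iff.2 (by rintro rfl; simp at hx)
  have hm : 0 ≤ rayleigh b ι x :=
    (rayleigh_pos (fun _ => re_apply_self_pos_of_coercive hα hcoer) hx).le
  refine le_of_mul_le_mul_right ?_ (pow_pos hx0 2)
  calc α * ‖x‖ ^ 2 ≤ (b x x).re := hcoer x
    _ = rayleigh b ι x * ‖ι x‖ ^ 2 := re_apply_self_eq_rayleigh_mul hx
    _ ≤ rayleigh b ι x * (‖ι‖ * ‖x‖) ^ 2 := by gcongr; exact ι.le_opNorm x
    _ = rayleigh b ι x * ‖ι‖ ^ 2 * ‖x‖ ^ 2 := by ring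

structure IsInversePowerIteration (b : V →ₗ⋆[ℂ] V →ₗ[ℂ] ℂ) (ι : V →L[ℂ] H) (u : ℕ → V) :
    Prop where
  ne_zero : ∀ j, ι (u j) ≠ 0
  apply_succ : ∀ j v, b (u (j + 1)) v =
    rayleigh b ι (u j) * ⟪(‖ι (u j)‖ : ℂ)⁻¹ • ι (u j), ι v⟫_ℂ

namespace IsInversePowerIteration

variable {u : ℕ → V}

theorem norm_pos (hu : IsInversePowerIteration b ι u) (j : ℕ) : 0 < ‖ι (u j)‖ :=
  norm_pos_iff.2 (hu.ne_zero j)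

theorem norm_inv_norm_smul (hu : IsInversePowerIteration b ι u) (j : ℕ) :
    ‖(‖ι (u j)‖ : ℂ)⁻¹ • ι (u j)‖ = 1 :=
  norm_smul_inv_norm (hu.ne_zero j)

theorem apply_succ_eq_inner (hu : IsInversePowerIteration b ι u) (j : ℕ) (v : V) :
    b (u (j + 1)) v = ⟪(rayleigh b ι (u j) : ℂ) • (‖ι (u j)‖ : ℂ)⁻¹ • ι (u j), ι v⟫_ℂ := by
  rw [inner_smul_left, Complex.conj_ofReal, hu.apply_succ]

theorem re_apply_succ (hu : IsInversePowerIteration b ι u) (j : ℕ) (v : V) :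
    (b (u (j + 1)) v).re =
      rayleigh b ι (u j) * (⟪(‖ι (u j)‖ : ℂ)⁻¹ • ι (u j), ι v⟫_ℂ).re := by
  rw [hu.apply_succ, Complex.re_ofReal_mul]

theorem re_apply_succ_self_le (hu : IsInversePowerIteration b ι u)
    (hpos : ∀ x, x ≠ 0 → 0 < (b x x).re) (j : ℕ) :
    (b (u (j + 1)) (u (j + 1))).re ≤ rayleigh b ι (u j) * ‖ι (u (j + 1))‖ := by
  rw [hu.re_apply_succ]
  refine mul_le_mul_of_nonneg_left ?_ (rayleigh_pos hpos (hu.ne_zero j)).le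
  calc _ ≤ ‖(‖ι (u j)‖ : ℂ)⁻¹ • ι (u j)‖ * ‖ι (u (j + 1))‖ := re_inner_le_norm (𝕜 := ℂ) _ _
    _ = ‖ι (u (j + 1))‖ := by rw [hu.norm_inv_norm_smul, one_mul]

theorem re_apply_succ_prev (hu : IsInversePowerIteration b ι u) (j : ℕ) :
    (b (u (j + 1)) (u j)).re = rayleigh b ι (u j) * ‖ι (u j)‖ := by
  rw [hu.re_apply_succ, inner_smul_left, inner_self_eq_norm_sq_to_K]
  simp [← Complex.ofReal_pow, ← Complex.ofReal_inv, field]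

theorem rayleigh_le_re_apply_succ_self (hu : IsInversePowerIteration b ι u) (hb : b.IsSymm)
    (hpos : ∀ x, x ≠ 0 → 0 < (b x x).re) (j : ℕ) :
    rayleigh b ι (u j) ≤ (b (u (j + 1)) (u (j + 1))).re := by
  have hnonneg : ∀ x, 0 ≤ (b x x).re := fun x => by
    rcases eq_or_ne x 0 with rfl | hx
    · simp
    · exact (hpos x hx).le
  have hcs := LinearMap.re_apply_sq_le_of_isSymm hb hnonneg (u (j + 1)) (u j)
  rw [hu.re_apply_succ_prev, re_apply_self_eq_rayleigh_mul (hu.ne_zero j)] at hcs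
  have hm := rayleigh_pos hpos (hu.ne_zero j)
  have hn := hu.norm_pos j
  nlinarith [mul_pos hm (pow_pos hn 2)]

theorem one_le_norm_succ (hu : IsInversePowerIteration b ι u) (hb : b.IsSymm)
    (hpos : ∀ x, x ≠ 0 → 0 < (b x x).re) (j : ℕ) : 1 ≤ ‖ι (u (j + 1))‖ :=
  (le_mul_iff_one_le_right (rayleigh_pos hpos (hu.ne_zero j))).1
    ((hu.rayleigh_le_re_apply_succ_self hb hpos j).trans (hu.re_apply_succ_self_le hpos j))

theorem rayleigh_succ_mul_norm_le (hu : IsInversePowerIteration b ι u)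
    (hpos : ∀ x, x ≠ 0 → 0 < (b x x).re) (j : ℕ) :
    rayleigh b ι (u (j + 1)) * ‖ι (u (j + 1))‖ ≤ rayleigh b ι (u j) := by
  have h := hu.re_apply_succ_self_le hpos j
  rw [re_apply_self_eq_rayleigh_mul (hu.ne_zero _), sq, ← mul_assoc] at h
  exact le_of_mul_le_mul_right h (hu.norm_pos _)

theorem antitone_rayleigh (hu : IsInversePowerIteration b ι u) (hb : b.IsSymm)
    (hpos : ∀ x, x ≠ 0 → 0 < (b x x).re) : Antitone fun j => rayleigh b ι (u j) :=
  antitone_nat_of_succ_le fun j =>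
    calc rayleigh b ι (u (j + 1))
        ≤ rayleigh b ι (u (j + 1)) * ‖ι (u (j + 1))‖ :=
          le_mul_of_one_le_right (rayleigh_pos hpos (hu.ne_zero _)).le
            (hu.one_le_norm_succ hb hpos j)
      _ ≤ rayleigh b ι (u j) := hu.rayleigh_succ_mul_norm_le hpos j

theorem exists_tendsto_rayleigh (hu : IsInversePowerIteration b ι u) (hb : b.IsSymm)
    (hα : 0 < α) (hcoer : ∀ x, α * ‖x‖ ^ 2 ≤ (b x x).re) :
    ∃ μ, 0 < μ ∧ Tendsto (fun j => rayleigh b ι (u j)) atTop (𝓝 μ) := by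
  have hpos : ∀ x, x ≠ 0 → 0 < (b x x).re := fun _ => re_apply_self_pos_of_coercive hα hcoer
  have hι : 0 < ‖ι‖ := norm_pos_iff.2 fun h => hu.ne_zero 0 (by simp [h])
  have hlb : ∀ j, α / ‖ι‖ ^ 2 ≤ rayleigh b ι (u j) := fun j =>
    (div_le_iff₀ (by positivity)).2 (le_rayleigh_mul_opNorm_sq hα hcoer (hu.ne_zero j))
  exact ⟨⨅ j, rayleigh b ι (u j), (by positivity : 0 < α / ‖ι‖ ^ 2).trans_le (le_ciInf hlb),
    tendsto_atTop_ciInf (hu.antitone_rayleigh hb hpos) ⟨_, Set.forall_mem_range.2 hlb⟩⟩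

theorem tendsto_norm_succ (hu : IsInversePowerIteration b ι u) (hb : b.IsSymm)
    (hpos : ∀ x, x ≠ 0 → 0 < (b x x).re) {μ : ℝ} (hμ : 0 < μ)
    (hlim : Tendsto (fun j => rayleigh b ι (u j)) atTop (𝓝 μ)) :
    Tendsto (fun j => ‖ι (u (j + 1))‖) atTop (𝓝 1) := by
  have hratio :
      Tendsto (fun j => rayleigh b ι (u j) / rayleigh b ι (u (j + 1))) atTop (𝓝 1) := by
    have := hlim.div (hlim.comp (tendsto_add_atTop_nat 1)) hμ.ne'
    rwa [div_self hμ.ne'] at this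
  refine tendsto_of_tendsto_of_tendsto_of_le_of_le tendsto_const_nhds hratio
    (hu.one_le_norm_succ hb hpos) fun j => ?_
  rw [le_div_iff₀ (rayleigh_pos hpos (hu.ne_zero _)), mul_comm]
  exact hu.rayleigh_succ_mul_norm_le hpos j

theorem tendsto_sub_inv_norm_smul (hu : IsInversePowerIteration b ι u) (hb : b.IsSymm)
    (hpos : ∀ x, x ≠ 0 → 0 < (b x x).re) {μ : ℝ} (hμ : 0 < μ)
    (hlim : Tendsto (fun j => rayleigh b ι (u j)) atTop (𝓝 μ)) :
    Tendsto (fun j => ι (u (j + 1)) - (‖ι (u j)‖ : ℂ)⁻¹ • ι (u j)) atTop (𝓝 0) := by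
  have hn := hu.tendsto_norm_succ hb hpos hμ hlim
  have hsq : ∀ j, ‖ι (u (j + 1)) - (‖ι (u j)‖ : ℂ)⁻¹ • ι (u j)‖ ^ 2 =
      ‖ι (u (j + 1))‖ ^ 2 -
        2 * (rayleigh b ι (u (j + 1)) * ‖ι (u (j + 1))‖ ^ 2 / rayleigh b ι (u j)) + 1 := by
    intro j
    rw [@norm_sub_sq ℂ, hu.norm_inv_norm_smul, ← re_apply_self_eq_rayleigh_mul (hu.ne_zero _),
      hu.re_apply_succ, inner_re_symm, RCLike.re_to_complex,
      mul_div_cancel_left₀ _ (rayleigh_pos hpos (hu.ne_zero j)).ne', one_pow]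
  have hsq0 : Tendsto (fun j => ‖ι (u (j + 1)) - (‖ι (u j)‖ : ℂ)⁻¹ • ι (u j)‖ ^ 2) atTop
      (𝓝 0) := by
    have h := ((hn.pow 2).sub ((((hlim.comp (tendsto_add_atTop_nat 1)).mul (hn.pow 2)).div
      hlim hμ.ne').const_mul 2)).add_const 1
    rw [show (1 : ℝ) ^ 2 - 2 * (μ * 1 ^ 2 / μ) + 1 = 0 by field_simp; ring] at h
    exact (tendsto_congr hsq).2 h
  rw [tendsto_zero_iff_norm_tendsto_zero]
  simpa using hsq0.sqrt

theorem norm_inv_norm_smul_le_sqrt (hu : IsInversePowerIteration b ι u) (hb : b.IsSymm)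
    (hα : 0 < α) (hcoer : ∀ x, α * ‖x‖ ^ 2 ≤ (b x x).re) (j : ℕ) :
    ‖(‖ι (u j)‖ : ℂ)⁻¹ • u j‖ ≤ √(rayleigh b ι (u 0) / α) := by
  have hn := hu.norm_pos j
  refine Real.le_sqrt_of_sq_le ?_
  rw [le_div_iff₀ hα, norm_smul, norm_inv, Complex.norm_real, Real.norm_of_nonneg hn.le]
  calc (‖ι (u j)‖⁻¹ * ‖u j‖) ^ 2 * α = α * ‖u j‖ ^ 2 / ‖ι (u j)‖ ^ 2 := by field_simp
    _ ≤ rayleigh b ι (u j) := by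
      rw [div_le_iff₀ (by positivity), ← re_apply_self_eq_rayleigh_mul (hu.ne_zero j)]
      exact hcoer _
    _ ≤ rayleigh b ι (u 0) :=
      hu.antitone_rayleigh hb (fun _ => re_apply_self_pos_of_coercive hα hcoer) (Nat.zero_le j)

theorem exists_eigenpair [CompleteSpace V] (hu : IsInversePowerIteration b ι u) (hb : b.IsSymm)
    (hα : 0 < α) (hcoer : ∀ x, α * ‖x‖ ^ 2 ≤ (b x x).re)
    (hcont : ∀ v, Continuous fun x => b x v) (hcomp : IsCompactOperator ι) :
    ∃ μ : ℝ, 0 < μ ∧ Tendsto (fun j => rayleigh b ι (u j)) atTop (𝓝 μ) ∧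
      ∃ (u₀ : V) (φ : ℕ → ℕ), StrictMono φ ∧ Tendsto (fun j => u (φ j)) atTop (𝓝 u₀) ∧
        ‖ι u₀‖ = 1 ∧ ∀ v, b u₀ v = μ * ⟪ι u₀, ι v⟫_ℂ := by
  have hpos : ∀ x, x ≠ 0 → 0 < (b x x).re := fun _ => re_apply_self_pos_of_coercive hα hcoer
  obtain ⟨μ, hμ, hlim⟩ := hu.exists_tendsto_rayleigh hb hα hcoer
  obtain ⟨ω, ψ, hψ, hw⟩ := hcomp.exists_tendsto_subseq (hu.norm_inv_norm_smul_le_sqrt hb hα hcoer)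
  simp only [map_smul] at hw
  have hω : ‖ω‖ = 1 :=
    tendsto_nhds_unique hw.norm (tendsto_const_nhds.congr fun j => (hu.norm_inv_norm_smul _).symm)
  have hsucc : Tendsto (fun j => ι (u (ψ j + 1))) atTop (𝓝 ω) := by
    simpa using hw.add ((hu.tendsto_sub_inv_norm_smul hb hpos hμ hlim).comp hψ.tendsto_atTop)
  have hc : Tendsto
      (fun j => (rayleigh b ι (u (ψ j)) : ℂ) • (‖ι (u (ψ j))‖ : ℂ)⁻¹ • ι (u (ψ j))) atTop
      (𝓝 ((μ : ℂ) • ω)) :=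
    ((Complex.continuous_ofReal.tendsto μ).comp (hlim.comp hψ.tendsto_atTop)).smul hw
  have hiter := fun j => hu.apply_succ_eq_inner (ψ j)
  obtain ⟨u₀, hu₀⟩ :=
    cauchySeq_tendsto_of_complete (cauchySeq_of_apply_eq_inner hα hcoer hiter hc.cauchySeq)
  have hιu₀ : ι u₀ = ω := tendsto_nhds_unique ((ι.continuous.tendsto u₀).comp hu₀) hsucc
  refine ⟨μ, hμ, hlim, u₀, fun j => ψ j + 1, hψ.add_const 1, hu₀, hιu₀ ▸ hω, fun v => ?_⟩
  rw [apply_eq_inner_of_tendsto hcont hiter hu₀ hc v, inner_smul_left, Complex.conj_ofReal,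
    hιu₀]

end IsInversePowerIteration

end CoerciveForm

section Shifted

variable {V H : Type*} [NormedAddCommGroup V] [InnerProductSpace ℂ V]
  [NormedAddCommGroup H] [InnerProductSpace ℂ H]

noncomputable def shiftedForm (a : V →ₗ⋆[ℂ] V →ₗ[ℂ] ℂ) (ι : V →L[ℂ] H) (β : ℝ) :
    V →ₗ⋆[ℂ] V →ₗ[ℂ] ℂ :=
  a + (β : ℂ) • ((innerₛₗ ℂ).comp (ι : V →ₗ[ℂ] H)).compl₂ (ι : V →ₗ[ℂ] H)

variable {a : V →ₗ⋆[ℂ] V →ₗ[ℂ] ℂ} {ι : V →L[ℂ] H} {β : ℝ}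

theorem shiftedForm_apply (x y : V) :
    shiftedForm a ι β x y = a x y + β * ⟪ι x, ι y⟫_ℂ :=
  rfl

theorem re_shiftedForm_apply_self (x : V) :
    (shiftedForm a ι β x x).re = (a x x).re + β * ‖ι x‖ ^ 2 := by
  simp [shiftedForm_apply, ← Complex.ofReal_pow]

theorem isSymm_shiftedForm (ha : a.IsSymm) : (shiftedForm a ι β).IsSymm :=
  ⟨fun x y => by simp [shiftedForm_apply, ← ha.eq x y]⟩

theorem continuous_shiftedForm_apply_left {C : ℝ} (hcont : ∀ x y, ‖a x y‖ ≤ C * ‖x‖ * ‖y‖)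
    (v : V) : Continuous fun x => shiftedForm a ι β x v := by
  have ha : Continuous fun x => a x v :=
    AddMonoidHomClass.continuous_of_bound (a.flip v) (C * ‖v‖) fun x => by
      simpa [mul_right_comm] using hcont x v
  simp only [shiftedForm_apply]
  fun_prop

end Shifted

theorem stmt_4_general {V H : Type*}
    [NormedAddCommGroup V] [InnerProductSpace ℂ V] [CompleteSpace V]
    [NormedAddCommGroup H] [InnerProductSpace ℂ H]
    (ι : V →L[ℂ] H) (hι : Function.Injective ι)
    (hcomp : IsCompactOperator (ι : V → H))
    (a : V →ₗ⋆[ℂ] V →ₗ[ℂ] ℂ)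
    (hHerm : ∀ u v : V, a u v = (starRingEnd ℂ) (a v u))
    (C : ℝ) (hcont : ∀ u v : V, ‖a u v‖ ≤ C * ‖u‖ * ‖v‖)
    (α β : ℝ) (hα : 0 < α)
    (hGarding : ∀ u : V, α * ‖u‖ ^ 2 - β * ‖ι u‖ ^ 2 ≤ (a u u).re)
    (u : ℕ → V) (hu : ∀ j, u j ≠ 0)
    (hiter : ∀ j : ℕ, ∀ v : V,
      a (u (j + 1)) v + (β : ℂ) * (inner ℂ (ι (u (j + 1))) (ι v) : ℂ) =
        ((((a (u j) (u j)).re + β * ‖ι (u j)‖ ^ 2) / ‖ι (u j)‖ ^ 2 : ℝ) : ℂ) *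
          (inner ℂ ((‖ι (u j)‖ : ℂ)⁻¹ • ι (u j)) (ι v) : ℂ)) :
    ∃ μstar : ℝ, 0 < μstar ∧
      Filter.Tendsto
        (fun j => ((a (u j) (u j)).re + β * ‖ι (u j)‖ ^ 2) / ‖ι (u j)‖ ^ 2)
        Filter.atTop (nhds μstar) ∧
      ∃ (ustar : V) (φ : ℕ → ℕ), StrictMono φ ∧
        Filter.Tendsto (fun j => u (φ j)) Filter.atTop (nhds ustar) ∧
        ‖ι ustar‖ = 1 ∧
        ∀ v : V, a ustar v = ((μstar - β : ℝ) : ℂ) * (inner ℂ (ι ustar) (ι v) : ℂ) := by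
  have hrayleigh : ∀ x, rayleigh (shiftedForm a ι β) ι x =
      ((a x x).re + β * ‖ι x‖ ^ 2) / ‖ι x‖ ^ 2 := fun x => by
    rw [rayleigh, re_shiftedForm_apply_self]
  have hb : (shiftedForm a ι β).IsSymm := isSymm_shiftedForm ⟨fun x y => (hHerm y x).symm⟩
  have hcoer : ∀ x, α * ‖x‖ ^ 2 ≤ (shiftedForm a ι β x x).re := fun x => by
    rw [re_shiftedForm_apply_self]
    linarith [hGarding x]
  have hpower : IsInversePowerIteration (shiftedForm a ι β) ι u :=
    ⟨fun j h => hu j (hι (h.trans (map_zero ι).symm)), fun j v => by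
      rw [hrayleigh, shiftedForm_apply]
      exact hiter j v⟩
  obtain ⟨μ, hμ, hlim, ustar, φ, hφ, hconv, hnorm, heig⟩ :=
    hpower.exists_eigenpair hb hα hcoer (continuous_shiftedForm_apply_left hcont) hcomp
  refine ⟨μ, hμ, by simpa only [hrayleigh] using hlim, ustar, φ, hφ, hconv, hnorm, fun v => ?_⟩
  have h := heig v
  rw [shiftedForm_apply] at h
  push_cast
  linear_combination h

/-- Theorem 3.1, convergence of the inverse power iteration:
`V`, `H` complex Hilbert spaces, `ι : V → H` injective, continuous, compact with dense range,
`a` a Hermitian continuous sesquilinear form satisfying the Gårding inequality with `α > 0`,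
`β ≥ 0`.  The shifted form is `a_β(u,v) = a(u,v) + β (ι u, ι v)_H` and the Rayleigh quotient
`μ(u) = a_β(u,u)/‖ι u‖²`.  If `u : ℕ → V` is a sequence of nonzero vectors satisfying the
inverse power iteration `a_β(uʲ, v) = μ(u^{j-1}) (ι u^{j-1}/‖ι u^{j-1}‖, ι v)_H` for all
`j ≥ 1`, `v ∈ V`, then `μ(uʲ)` converges to some `μ⋆ > 0` and a subsequence of `uʲ`
converges in `V` to some `u⋆` with `‖ι u⋆‖ = 1` and `a(u⋆,v) = (μ⋆-β)(ι u⋆, ι v)_H`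
for all `v`. -/
theorem stmt_4 {V H : Type*}
    [NormedAddCommGroup V] [InnerProductSpace ℂ V] [CompleteSpace V]
    [NormedAddCommGroup H] [InnerProductSpace ℂ H] [CompleteSpace H]
    (ι : V →L[ℂ] H) (hι : Function.Injective ι)
    (hcomp : IsCompactOperator (ι : V → H)) (hdense : DenseRange (ι : V → H))
    (a : V →ₗ⋆[ℂ] V →ₗ[ℂ] ℂ)
    (hHerm : ∀ u v : V, a u v = (starRingEnd ℂ) (a v u))
    (C : ℝ) (hcont : ∀ u v : V, ‖a u v‖ ≤ C * ‖u‖ * ‖v‖)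
    (α β : ℝ) (hα : 0 < α) (hβ : 0 ≤ β)
    (hGarding : ∀ u : V, α * ‖u‖ ^ 2 - β * ‖ι u‖ ^ 2 ≤ (a u u).re)
    (u : ℕ → V) (hu : ∀ j, u j ≠ 0)
    (hiter : ∀ j : ℕ, ∀ v : V,
      a (u (j + 1)) v + (β : ℂ) * (inner ℂ (ι (u (j + 1))) (ι v) : ℂ) =
        ((((a (u j) (u j)).re + β * ‖ι (u j)‖ ^ 2) / ‖ι (u j)‖ ^ 2 : ℝ) : ℂ) *
          (inner ℂ ((‖ι (u j)‖ : ℂ)⁻¹ • ι (u j)) (ι v) : ℂ)) :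
    ∃ μstar : ℝ, 0 < μstar ∧
      Filter.Tendsto
        (fun j => ((a (u j) (u j)).re + β * ‖ι (u j)‖ ^ 2) / ‖ι (u j)‖ ^ 2)
        Filter.atTop (nhds μstar) ∧
      ∃ (ustar : V) (φ : ℕ → ℕ), StrictMono φ ∧
        Filter.Tendsto (fun j => u (φ j)) Filter.atTop (nhds ustar) ∧
        ‖ι ustar‖ = 1 ∧
        ∀ v : V, a ustar v = ((μstar - β : ℝ) : ℂ) * (inner ℂ (ι ustar) (ι v) : ℂ) :=
  stmt_4_general ι hι hcomp a hHerm C hcont α β hα hGarding u hu hiter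
end

section
/- Let u, w ∈ V with u ≠ 0 and suppose w satisfies, for all v ∈ V, a_β(w, v) = μ(u) · ( ι u / ‖ι u‖_H , ι v )_H. Then w ≠ 0 and μ(w) ≤ μ(u); that is, one step of the inverse power iteration does not increase the Rayleigh quotient. -/
/-! With `N = ‖ι u‖` and `μ = μ(u)`, testing the step equation with `v = u` gives
`a_β(w, u) = μ N`, and testing it with `v = w` gives `a_β(w, w) ≤ μ ‖ι w‖` by Cauchy–Schwarz
in `H`.
By Gårding, `a_β` is a positive Hermitian form, so Cauchy–Schwarz for `a_β` gives
`μ² N² ≤ a_β(w, w) · μ N²`, i.e. `μ ≤ a_β(w, w)`. Hence `‖ι w‖ ≥ 1` (so `w ≠ 0`) and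
`μ(w) ≤ μ ‖ι w‖ / ‖ι w‖² ≤ μ`. -/

namespace LinearMap

open RCLike

variable {𝕜 E F : Type*} [RCLike 𝕜] [AddCommGroup E] [Module 𝕜 E]
  [NormedAddCommGroup F] [InnerProductSpace 𝕜 F]

theorem IsSymm.norm_apply_sq_le {B : E →ₗ⋆[𝕜] E →ₗ[𝕜] 𝕜} (hB : B.IsSymm)
    (hB₀ : ∀ x, 0 ≤ re (B x x)) (x y : E) : ‖B x y‖ ^ 2 ≤ re (B x x) * re (B y y) := by
  let core : PreInnerProductSpace.Core 𝕜 E :=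
    { inner := fun x y => B x y
      conj_inner_symm := fun x y => hB.eq y x
      re_inner_nonneg := hB₀
      add_left := fun x y z => by simp
      smul_left := fun x y r => by simp }
  have hyx : ‖B y x‖ = ‖B x y‖ := by rw [← hB.eq x y, RCLike.norm_conj]
  have h := InnerProductSpace.Core.inner_mul_inner_self_le (c := core) x y
  change ‖B x y‖ * ‖B y x‖ ≤ re (B x x) * re (B y y) at h
  rwa [hyx, ← sq] at h

def shiftedForm (a : E →ₗ⋆[𝕜] E →ₗ[𝕜] 𝕜) (ι : E →ₗ[𝕜] F) (β : ℝ) : E →ₗ⋆[𝕜] E →ₗ[𝕜] 𝕜 :=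
  a + (β : 𝕜) • ((innerₛₗ 𝕜).comp ι).compl₂ ι

@[simp]
theorem shiftedForm_apply (a : E →ₗ⋆[𝕜] E →ₗ[𝕜] 𝕜) (ι : E →ₗ[𝕜] F) (β : ℝ) (x y : E) :
    shiftedForm a ι β x y = a x y + β * inner 𝕜 (ι x) (ι y) := rfl

theorem re_shiftedForm_apply_self (a : E →ₗ⋆[𝕜] E →ₗ[𝕜] 𝕜) (ι : E →ₗ[𝕜] F) (β : ℝ) (x : E) :
    re (shiftedForm a ι β x x) = re (a x x) + β * ‖ι x‖ ^ 2 := by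
  rw [shiftedForm_apply, inner_self_eq_norm_sq_to_K, ← ofReal_pow, map_add, re_ofReal_mul,
    ofReal_re]

theorem IsSymm.shiftedForm {a : E →ₗ⋆[𝕜] E →ₗ[𝕜] 𝕜} (ha : a.IsSymm) (ι : E →ₗ[𝕜] F) (β : ℝ) :
    (shiftedForm a ι β).IsSymm :=
  isSymm_def.2 fun x y => by simp [ha.eq x y]

noncomputable def rayleighQuotient (B : E →ₗ⋆[𝕜] E →ₗ[𝕜] 𝕜) (ι : E → F) (x : E) : ℝ :=
  re (B x x) / ‖ι x‖ ^ 2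

theorem IsSymm.one_le_norm_and_rayleighQuotient_le {B : E →ₗ⋆[𝕜] E →ₗ[𝕜] 𝕜} (hB : B.IsSymm)
    (hB₀ : ∀ x, 0 ≤ re (B x x)) {ι : E → F} {u w : E} (hμ : 0 < B.rayleighQuotient ι u)
    (hstep : ∀ v, B w v =
      (B.rayleighQuotient ι u : 𝕜) * inner 𝕜 ((‖ι u‖ : 𝕜)⁻¹ • ι u) (ι v)) :
    1 ≤ ‖ι w‖ ∧ B.rayleighQuotient ι w ≤ B.rayleighQuotient ι u := by
  set μ := B.rayleighQuotient ι u
  set N := ‖ι u‖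
  -- `μ > 0` rules out `ι u = 0`, where the quotient would be the junk value `x / 0 = 0`.
  have hN : 0 < N := by
    refine (norm_nonneg _).lt_of_ne fun h => hμ.ne' ?_
    simp [μ, rayleighQuotient, ← h]
  have hμdef : μ = re (B u u) / N ^ 2 := rfl
  have hNdef : ‖ι u‖ = N := rfl
  clear_value μ N
  have hstep' : ∀ v, B w v = ((μ / N : ℝ) : 𝕜) * inner 𝕜 (ι u) (ι v) := fun v => by
    rw [hstep, inner_smul_left, ← ofReal_inv, conj_ofReal, ← mul_assoc, ← ofReal_mul,
      div_eq_mul_inv]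
  have hwu : B w u = ((μ * N : ℝ) : 𝕜) := by
    rw [hstep', inner_self_eq_norm_sq_to_K, hNdef, ← ofReal_pow, ← ofReal_mul]
    congr 1
    field_simp
  have huu : re (B u u) = μ * N ^ 2 := by
    rw [hμdef]
    field_simp
  have hww_le : re (B w w) ≤ μ * ‖ι w‖ := by
    rw [hstep', re_ofReal_mul]
    calc μ / N * re (inner 𝕜 (ι u) (ι w)) ≤ μ / N * (N * ‖ι w‖) := by
          gcongr
          exact hNdef ▸ re_inner_le_norm _ _
      _ = μ * ‖ι w‖ := by field_simp
  have hle_ww : μ ≤ re (B w w) := by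
    have hCS := hB.norm_apply_sq_le hB₀ w u
    rw [hwu, huu, norm_ofReal, abs_of_pos (by positivity)] at hCS
    have : μ * (μ * N ^ 2) ≤ re (B w w) * (μ * N ^ 2) := by linarith
    exact le_of_mul_le_mul_right this (by positivity)
  have hιw : 1 ≤ ‖ι w‖ := le_of_mul_le_mul_left (by linarith : μ * 1 ≤ μ * ‖ι w‖) hμ
  refine ⟨hιw, ?_⟩
  calc B.rayleighQuotient ι w = re (B w w) / ‖ι w‖ ^ 2 := rfl
    _ ≤ μ * ‖ι w‖ / ‖ι w‖ ^ 2 := by gcongr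
    _ = μ / ‖ι w‖ := by field_simp
    _ ≤ μ := div_le_self hμ.le hιw

end LinearMap

theorem stmt_5_general {V H : Type*}
    [NormedAddCommGroup V] [InnerProductSpace ℂ V]
    [NormedAddCommGroup H] [InnerProductSpace ℂ H]
    (ι : V →L[ℂ] H) (hι : Function.Injective ι)
    (a : V →ₗ⋆[ℂ] V →ₗ[ℂ] ℂ)
    (hHerm : ∀ u v : V, a u v = (starRingEnd ℂ) (a v u))
    (α β : ℝ) (hα : 0 < α)
    (hGarding : ∀ u : V, α * ‖u‖ ^ 2 - β * ‖ι u‖ ^ 2 ≤ (a u u).re)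
    (u w : V) (hu : u ≠ 0)
    (hstep : ∀ v : V,
      a w v + (β : ℂ) * (inner ℂ (ι w) (ι v) : ℂ) =
        ((((a u u).re + β * ‖ι u‖ ^ 2) / ‖ι u‖ ^ 2 : ℝ) : ℂ) *
          (inner ℂ ((‖ι u‖ : ℂ)⁻¹ • ι u) (ι v) : ℂ)) :
    w ≠ 0 ∧
      ((a w w).re + β * ‖ι w‖ ^ 2) / ‖ι w‖ ^ 2 ≤
        ((a u u).re + β * ‖ι u‖ ^ 2) / ‖ι u‖ ^ 2 := by
  set b := a.shiftedForm ι.toLinearMap β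
  have hre : ∀ x, RCLike.re (b x x) = (a x x).re + β * ‖ι x‖ ^ 2 :=
    LinearMap.re_shiftedForm_apply_self a _ β
  have hcoercive : ∀ x, α * ‖x‖ ^ 2 ≤ RCLike.re (b x x) := fun x => by linarith [hre x, hGarding x]
  have hιu : ι u ≠ 0 := (map_ne_zero_iff ι hι).2 hu
  have hρ : ∀ x, b.rayleighQuotient ι x = ((a x x).re + β * ‖ι x‖ ^ 2) / ‖ι x‖ ^ 2 :=
    fun x => by rw [LinearMap.rayleighQuotient, hre]
  have hμ : 0 < b.rayleighQuotient ι u :=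
    div_pos ((by positivity : 0 < α * ‖u‖ ^ 2).trans_le (hcoercive u)) (by positivity)
  have hsymm : a.IsSymm := LinearMap.isSymm_def.2 fun x y => (hHerm y x).symm
  obtain ⟨hw, hle⟩ := (hsymm.shiftedForm ι.toLinearMap β).one_le_norm_and_rayleighQuotient_le
    (fun x => (by positivity : 0 ≤ α * ‖x‖ ^ 2).trans (hcoercive x)) hμ
    (fun v => by rw [hρ]; exact hstep v)
  refine ⟨fun h => by norm_num [h] at hw, ?_⟩
  rwa [hρ, hρ] at hle

/-- one step of the inverse power iteration does not increase the Rayleigh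
quotient: with the setting of the Gårding framework, if `u ≠ 0` and `w` satisfies
`a_β(w, v) = μ(u) (ι u/‖ι u‖, ι v)_H` for all `v ∈ V`, then `w ≠ 0` and `μ(w) ≤ μ(u)`,
where `a_β(u,v) = a(u,v) + β (ι u, ι v)_H` and `μ(u) = a_β(u,u)/‖ι u‖²`. -/
theorem stmt_5 {V H : Type*}
    [NormedAddCommGroup V] [InnerProductSpace ℂ V] [CompleteSpace V]
    [NormedAddCommGroup H] [InnerProductSpace ℂ H] [CompleteSpace H]
    (ι : V →L[ℂ] H) (hι : Function.Injective ι)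
    (a : V →ₗ⋆[ℂ] V →ₗ[ℂ] ℂ)
    (hHerm : ∀ u v : V, a u v = (starRingEnd ℂ) (a v u))
    (C : ℝ) (hcont : ∀ u v : V, ‖a u v‖ ≤ C * ‖u‖ * ‖v‖)
    (α β : ℝ) (hα : 0 < α) (hβ : 0 ≤ β)
    (hGarding : ∀ u : V, α * ‖u‖ ^ 2 - β * ‖ι u‖ ^ 2 ≤ (a u u).re)
    (u w : V) (hu : u ≠ 0)
    (hstep : ∀ v : V,
      a w v + (β : ℂ) * (inner ℂ (ι w) (ι v) : ℂ) =
        ((((a u u).re + β * ‖ι u‖ ^ 2) / ‖ι u‖ ^ 2 : ℝ) : ℂ) *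
          (inner ℂ ((‖ι u‖ : ℂ)⁻¹ • ι u) (ι v) : ℂ)) :
    w ≠ 0 ∧
      ((a w w).re + β * ‖ι w‖ ^ 2) / ‖ι w‖ ^ 2 ≤
        ((a u u).re + β * ‖ι u‖ ^ 2) / ‖ι u‖ ^ 2 :=
  stmt_5_general ι hι a hHerm α β hα hGarding u w hu hstep
end

section
/- Let V be a complex Hilbert space with topological dual V*, and let T : V → V* be a continuous linear map that is self-adjoint in the sense ⟨T v₁, v₂⟩ = conj(⟨T v₂, v₁⟩) for all v₁, v₂ ∈ V. Let u⋆ ∈ V, u⋆ ≠ 0, with ker(T) = span{u⋆}. Let w ∈ V* satisfy ⟨w, u⋆⟩ ≠ 0 and suppose { h ∈ V* : ⟨h, u⋆⟩ = 0 } ⊆ range(T). Let P : V → ℂ be a continuous linear functional with P(u⋆) ≠ 0. Then the block map (s, ν) ↦ (T s + ν·w, P(s)) from V × ℂ to V* × ℂ is bijective: for every f ∈ V* and g ∈ ℂ there exist unique s ∈ V and ν ∈ ℂ with T s + ν·w = f and P(s) = g. In particular ν = ⟨f, u⋆⟩ / ⟨w, u⋆⟩. -/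
/-!
Self-adjointness puts the range of `T` inside the annihilator of `u⋆`, and the hypothesis on the
range gives equality. Evaluating `T s + ν w = f` at `u⋆` therefore forces `ν = ⟨f, u⋆⟩ / ⟨w, u⋆⟩`;
then `f - ν w` lies in the range of `T`, so `s` is determined up to the kernel `span{u⋆}`, and
the multiple of `u⋆` is fixed by `P s = g` because `P u⋆ ≠ 0`.
-/

namespace BorderedOperator

variable {K E F : Type*} [Field K] [AddCommGroup E] [Module K E] [AddCommGroup F] [Module K F]
  {A : E →ₗ[K] F} {φ : F →ₗ[K] K} {P : E →ₗ[K] K} {w : F} {u : E}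

theorem coeff_eq_of_apply_add_smul_eq (hφA : ∀ s, φ (A s) = 0) (hw : φ w ≠ 0)
    {s : E} {ν : K} {f : F} (h : A s + ν • w = f) : ν = φ f / φ w := by
  rw [eq_div_iff hw, ← h, map_add, map_smul, hφA, zero_add, smul_eq_mul]

theorem exists_apply_add_smul_eq (hrange : ∀ h, φ h = 0 → ∃ v, A v = h) (hAu : A u = 0)
    (hw : φ w ≠ 0) (hP : P u ≠ 0) (f : F) (g : K) :
    ∃ s, A s + (φ f / φ w) • w = f ∧ P s = g := by
  obtain ⟨v, hv⟩ := hrange (f - (φ f / φ w) • w) (by simp [hw])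
  refine ⟨v + ((g - P v) / P u) • u, ?_, ?_⟩
  · simp [hAu, hv]
  · simp [hP]

theorem eq_of_apply_eq (hker : ∀ v, A v = 0 → ∃ c : K, v = c • u) (hP : P u ≠ 0) {s₁ s₂ : E}
    (hA : A s₁ = A s₂) (hPs : P s₁ = P s₂) : s₁ = s₂ := by
  obtain ⟨c, hc⟩ := hker (s₁ - s₂) (by rw [map_sub, hA, sub_self])
  have hc0 : c = 0 := by
    have : c * P u = 0 := by rw [← smul_eq_mul, ← map_smul, ← hc, map_sub, hPs, sub_self]
    exact (mul_eq_zero.mp this).resolve_right hP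
  rwa [hc0, zero_smul, sub_eq_zero] at hc

theorem existsUnique_apply_add_smul_eq (hφA : ∀ s, φ (A s) = 0)
    (hrange : ∀ h, φ h = 0 → ∃ v, A v = h) (hker : ∀ v, A v = 0 ↔ ∃ c : K, v = c • u)
    (hw : φ w ≠ 0) (hP : P u ≠ 0) (f : F) (g : K) :
    ∃! p : E × K, A p.1 + p.2 • w = f ∧ P p.1 = g := by
  have hAu : A u = 0 := (hker u).mpr ⟨1, (one_smul K u).symm⟩
  obtain ⟨s, hs, hPs⟩ := exists_apply_add_smul_eq hrange hAu hw hP f g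
  refine ⟨(s, φ f / φ w), ⟨hs, hPs⟩, fun ⟨s', ν'⟩ ⟨h', hPs'⟩ => ?_⟩
  obtain rfl : ν' = φ f / φ w := coeff_eq_of_apply_add_smul_eq hφA hw h'
  have hA : A s' = A s := add_right_cancel (h'.trans hs.symm)
  exact Prod.ext (eq_of_apply_eq (fun v => (hker v).mp) hP hA (hPs'.trans hPs.symm)) rfl

end BorderedOperator

theorem stmt_12_general {V : Type*}
    [NormedAddCommGroup V] [InnerProductSpace ℂ V]
    (T : V →L[ℂ] (V →L[ℂ] ℂ))
    (hsa : ∀ v₁ v₂ : V, T v₁ v₂ = (starRingEnd ℂ) (T v₂ v₁))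
    (ustar : V)
    (hker : ∀ v : V, T v = 0 ↔ ∃ c : ℂ, v = c • ustar)
    (w : V →L[ℂ] ℂ) (hw : w ustar ≠ 0)
    (hrange : ∀ h : V →L[ℂ] ℂ, h ustar = 0 → ∃ v : V, T v = h)
    (P : V →L[ℂ] ℂ) (hP : P ustar ≠ 0) :
    ∀ (f : V →L[ℂ] ℂ) (g : ℂ),
      (∃! p : V × ℂ, T p.1 + p.2 • w = f ∧ P p.1 = g) ∧
        ∀ (s : V) (ν : ℂ), T s + ν • w = f → P s = g → ν = f ustar / w ustar := by
  intro f g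
  let φ : (V →L[ℂ] ℂ) →ₗ[ℂ] ℂ := (ContinuousLinearMap.apply ℂ ℂ ustar).toLinearMap
  have hTu : T ustar = 0 := (hker ustar).mpr ⟨1, (one_smul ℂ ustar).symm⟩
  have hφT (s : V) : φ (T s) = 0 := by
    change T s ustar = 0
    rw [hsa, hTu, zero_apply, map_zero]
  exact ⟨BorderedOperator.existsUnique_apply_add_smul_eq (A := T.toLinearMap)
      hφT hrange hker hw hP f g,
    fun s ν h _ => BorderedOperator.coeff_eq_of_apply_add_smul_eq (A := T.toLinearMap) hφT hw h⟩

/-- Lemma 5.5, invertibility of the Newton Jacobian at the eigenvalue: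
let `T : V → V*` be continuous linear and self-adjoint (`⟨T v₁, v₂⟩ = conj ⟨T v₂, v₁⟩`),
`u⋆ ≠ 0` with `ker T = span{u⋆}`, `w ∈ V*` with `⟨w, u⋆⟩ ≠ 0` and
`{h : ⟨h, u⋆⟩ = 0} ⊆ range T`, and `P` a continuous linear functional with `P u⋆ ≠ 0`.
Then the block map `(s, ν) ↦ (T s + ν w, P s)` is bijective; in particular the unique
solution of `T s + ν w = f`, `P s = g` has `ν = ⟨f, u⋆⟩ / ⟨w, u⋆⟩`. -/
theorem stmt_12 {V : Type*}
    [NormedAddCommGroup V] [InnerProductSpace ℂ V] [CompleteSpace V]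
    (T : V →L[ℂ] (V →L[ℂ] ℂ))
    (hsa : ∀ v₁ v₂ : V, T v₁ v₂ = (starRingEnd ℂ) (T v₂ v₁))
    (ustar : V) (hustar : ustar ≠ 0)
    (hker : ∀ v : V, T v = 0 ↔ ∃ c : ℂ, v = c • ustar)
    (w : V →L[ℂ] ℂ) (hw : w ustar ≠ 0)
    (hrange : ∀ h : V →L[ℂ] ℂ, h ustar = 0 → ∃ v : V, T v = h)
    (P : V →L[ℂ] ℂ) (hP : P ustar ≠ 0) :
    ∀ (f : V →L[ℂ] ℂ) (g : ℂ),
      (∃! p : V × ℂ, T p.1 + p.2 • w = f ∧ P p.1 = g) ∧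
        ∀ (s : V) (ν : ℂ), T s + ν • w = f → P s = g → ν = f ustar / w ustar :=
  stmt_12_general T hsa ustar hker w hw hrange P hP
end

section
/- (Newton–Kantorovich.) Let X and Y be real Banach spaces, let D ⊆ X be open and convex, and let F : X → Y be Fréchet differentiable at every point of D with derivative F'(z). Let z₀ ∈ D and suppose F'(z₀) is invertible with continuous inverse F'(z₀)⁻¹. Assume there are constants α ≥ 0 and κ₀ > 0 such that ‖F'(z₀)⁻¹ F(z₀)‖ ≤ α, and ‖F'(z₀)⁻¹ ∘ (F'(z) − F'(z̃))‖_{op} ≤ κ₀·‖z − z̃‖ for all z, z̃ ∈ D. Set h₀ := α·κ₀ and assume h₀ ≤ 1/2 and that the closed ball of radius ρ := (1 − √(1 − 2h₀))/κ₀ around z₀ is contained in D. Then there exists a sequence z : ℕ → X with z(0) = z₀ such that for every j, F'(z(j)) is invertible and z(j+1) = z(j) − F'(z(j))⁻¹ F(z(j)), every z(j) lies in the closed ball of radius ρ around z₀, and z(j) converges to some z⋆ in that ball with F(z⋆) = 0. -/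
/-!
Kantorovich's majorant argument. Composing with `F'(z₀)⁻¹` reduces to a map `g : X → X` with
`g'(z₀) = 1`. Newton's method for the scalar majorant `p t = κ/2 t² - t + α`, started at `0`,
produces `t_j` increasing to the smaller root `ρ` of `p`. By induction `‖z_j - z₀‖ ≤ t_j` and
`‖g z_j‖ ≤ p t_j`: the Lipschitz bound gives `‖g'(z_j) - 1‖ ≤ κ t_j < 1`, so `g'(z_j)` is
invertible by a Neumann series with `‖z_{j+1} - z_j‖ ≤ t_{j+1} - t_j`, and the second-order
Taylor estimate `‖g y - g x - g' x (y - x)‖ ≤ κ/2 ‖y - x‖²` bounds the next residual by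
`κ/2 (t_{j+1} - t_j)² = p t_{j+1}`. So `(z_j)` is Cauchy, dominated by `(t_j)`, and the
residuals `p t_j ≤ t_{j+1} - t_j` tend to `0`.
-/

open Filter Metric Set Topology

noncomputable section

def kantorovichPoly (κ α t : ℝ) : ℝ := κ / 2 * t ^ 2 - t + α

def kantorovichSeq (κ α : ℝ) : ℕ → ℝ
  | 0 => 0
  | j + 1 => kantorovichSeq κ α j +
      kantorovichPoly κ α (kantorovichSeq κ α j) / (1 - κ * kantorovichSeq κ α j)

def kantorovichRadius (κ α : ℝ) : ℝ := (1 - √(1 - 2 * (α * κ))) / κ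

structure IsKantorovichRoot (κ α ρ : ℝ) : Prop where
  coeff_nonneg : 0 ≤ κ
  nonneg : 0 ≤ ρ
  mul_le_one : κ * ρ ≤ 1
  isRoot : kantorovichPoly κ α ρ = 0

/-- `ContinuousLinearMap.inverse` is `0` on non-invertible maps, so this is a Newton step only
where `f' x` is invertible. -/
def newtonMap {E F : Type*} [NormedAddCommGroup E] [NormedSpace ℝ E]
    [NormedAddCommGroup F] [NormedSpace ℝ F] (f : E → F) (f' : E → E →L[ℝ] F) (x : E) : E :=
  x - (f' x).inverse (f x)

end

section Majorant

variable {κ α ρ : ℝ}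

lemma isKantorovichRoot_kantorovichRadius (hκ : 0 < κ) (hα : 0 ≤ α) (h : α * κ ≤ 1 / 2) :
    IsKantorovichRoot κ α (kantorovichRadius κ α) := by
  set s := √(1 - 2 * (α * κ))
  have hs : s ^ 2 = 1 - 2 * (α * κ) := Real.sq_sqrt (by linarith)
  have hs1 : s ≤ 1 := Real.sqrt_le_one.2 (by nlinarith)
  have hκρ : κ * kantorovichRadius κ α = 1 - s := mul_div_cancel₀ _ hκ.ne'
  refine ⟨hκ.le, div_nonneg (by linarith) hκ.le, by linarith [Real.sqrt_nonneg (1 - 2 * (α * κ))],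
    ?_⟩
  have : κ * kantorovichPoly κ α (kantorovichRadius κ α) = 0 := by
    unfold kantorovichPoly
    linear_combination ((κ * kantorovichRadius κ α + 1 - s) / 2 - 1) * hκρ + hs / 2
  exact (mul_eq_zero.1 this).resolve_left hκ.ne'

lemma kantorovichPoly_kantorovichSeq {j : ℕ} (hj : κ * kantorovichSeq κ α j < 1) :
    kantorovichPoly κ α (kantorovichSeq κ α j) =
      (kantorovichSeq κ α (j + 1) - kantorovichSeq κ α j) * (1 - κ * kantorovichSeq κ α j) := by
  rw [kantorovichSeq, add_sub_cancel_left, div_mul_cancel₀ _ (by linarith)]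

lemma kantorovichPoly_kantorovichSeq_succ {j : ℕ} (hj : κ * kantorovichSeq κ α j < 1) :
    kantorovichPoly κ α (kantorovichSeq κ α (j + 1)) =
      κ / 2 * (kantorovichSeq κ α (j + 1) - kantorovichSeq κ α j) ^ 2 := by
  have h := kantorovichPoly_kantorovichSeq hj
  unfold kantorovichPoly at *
  linear_combination h

namespace IsKantorovichRoot

variable (hρ : IsKantorovichRoot κ α ρ)
include hρ

lemma kantorovichPoly_nonneg {t : ℝ} (ht : t ≤ ρ) : 0 ≤ kantorovichPoly κ α t := by
  have hκ := hρ.coeff_nonneg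
  have : kantorovichPoly κ α t = (ρ - t) * (1 - κ * (t + ρ) / 2) := by
    have := hρ.isRoot
    unfold kantorovichPoly at this ⊢
    linear_combination this
  rw [this]
  exact mul_nonneg (by linarith) (by nlinarith [hρ.mul_le_one])

lemma kantorovichSeq_le_and_mul_lt_one (j : ℕ) :
    kantorovichSeq κ α j ≤ ρ ∧ κ * kantorovichSeq κ α j < 1 := by
  induction j with
  | zero => simp [kantorovichSeq, hρ.nonneg]
  | succ j ih =>
    obtain ⟨hle, hlt⟩ := ih
    have hstep := kantorovichPoly_kantorovichSeq hlt
    have hroot := hρ.isRoot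
    set t := kantorovichSeq κ α j
    set t' := kantorovichSeq κ α (j + 1)
    have hd : 0 < 1 - κ * t := by linarith
    have hgap : (ρ - t') * (1 - κ * t) = κ / 2 * (ρ - t) ^ 2 := by
      unfold kantorovichPoly at hroot hstep
      linear_combination hstep - hroot
    have hκ := hρ.coeff_nonneg
    have hgap₀ : 0 ≤ ρ - t' := nonneg_of_mul_nonneg_left (hgap ▸ by positivity) hd
    refine ⟨by linarith, ?_⟩
    nlinarith [sq_nonneg (1 - κ * ρ + κ * (ρ - t) / 2), mul_nonneg hκ hgap₀, hρ.mul_le_one]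

lemma kantorovichSeq_monotone : Monotone (kantorovichSeq κ α) := by
  refine monotone_nat_of_le_succ fun j => ?_
  obtain ⟨hle, hlt⟩ := hρ.kantorovichSeq_le_and_mul_lt_one j
  have hp := hρ.kantorovichPoly_nonneg hle
  rw [kantorovichPoly_kantorovichSeq hlt] at hp
  linarith [nonneg_of_mul_nonneg_left hp (by linarith)]

lemma summable_kantorovichSeq_succ_sub :
    Summable fun j => kantorovichSeq κ α (j + 1) - kantorovichSeq κ α j := by
  have hmono := hρ.kantorovichSeq_monotone
  refine summable_of_sum_range_le (c := ρ) (fun j => sub_nonneg.2 (hmono j.le_succ))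
    fun n => ?_
  rw [Finset.sum_range_sub (kantorovichSeq κ α)]
  simpa [kantorovichSeq] using (hρ.kantorovichSeq_le_and_mul_lt_one n).1

lemma kantorovichPoly_kantorovichSeq_le (j : ℕ) :
    kantorovichPoly κ α (kantorovichSeq κ α j) ≤
      kantorovichSeq κ α (j + 1) - kantorovichSeq κ α j := by
  have hmono := hρ.kantorovichSeq_monotone
  have ht₀ : 0 ≤ kantorovichSeq κ α j := hmono (Nat.zero_le j)
  rw [kantorovichPoly_kantorovichSeq (hρ.kantorovichSeq_le_and_mul_lt_one j).2]
  nlinarith [sub_nonneg.2 (hmono j.le_succ), mul_nonneg hρ.coeff_nonneg ht₀]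

end IsKantorovichRoot

end Majorant

section Perturbation

variable {𝕜 E : Type*} [NontriviallyNormedField 𝕜] [NormedAddCommGroup E] [NormedSpace 𝕜 E]

lemma ContinuousLinearMap.one_sub_norm_sub_one_mul_norm_le (S : E →L[𝕜] E) (x : E) :
    (1 - ‖S - 1‖) * ‖x‖ ≤ ‖S x‖ := by
  have : ‖x‖ ≤ ‖S x‖ + ‖S - 1‖ * ‖x‖ :=
    calc ‖x‖ = ‖S x - (S - 1) x‖ := by simp
      _ ≤ ‖S x‖ + ‖S - 1‖ * ‖x‖ := (norm_sub_le _ _).trans (by gcongr; exact le_opNorm _ _)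
  linarith

lemma ContinuousLinearMap.isInvertible_of_norm_sub_one_lt_one [CompleteSpace E]
    {S : E →L[𝕜] E} (h : ‖S - 1‖ < 1) : S.IsInvertible := by
  have h' : ‖1 - S‖ < 1 := by rwa [norm_sub_rev]
  exact ⟨.ofUnit ((Units.oneSub (1 - S) h').copy S (by simp) _ rfl), rfl⟩

end Perturbation

section Newton

variable {E F G : Type*} [NormedAddCommGroup E] [NormedSpace ℝ E]
  [NormedAddCommGroup F] [NormedSpace ℝ F] [NormedAddCommGroup G] [NormedSpace ℝ G]

theorem norm_image_sub_sub_fderiv_le_of_norm_fderiv_sub_le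
    {f : E → F} {f' : E → E →L[ℝ] F} {x y : E} {C : ℝ}
    (hf : ∀ z ∈ segment ℝ x y, HasFDerivAt f (f' z) z)
    (hC : ∀ z ∈ segment ℝ x y, ‖f' z - f' x‖ ≤ C * ‖z - x‖) :
    ‖f y - f x - f' x (y - x)‖ ≤ C / 2 * ‖y - x‖ ^ 2 := by
  set γ : ℝ → E := fun t => x + t • (y - x)
  have hγ : ∀ t ∈ Icc (0 : ℝ) 1, γ t ∈ segment ℝ x y := fun t ht => by
    rw [segment_eq_image']; exact ⟨t, ht, rfl⟩
  set g : ℝ → F := fun t => f (γ t) - f x - t • f' x (y - x)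
  have hg : ∀ t ∈ Icc (0 : ℝ) 1, HasDerivAt g (f' (γ t) (y - x) - f' x (y - x)) t := by
    intro t ht
    have hγ' : HasDerivAt γ (y - x) t := by
      simpa only [one_smul] using ((hasDerivAt_id' t).smul_const (y - x)).const_add x
    have hlin : HasDerivAt (fun s : ℝ => s • f' x (y - x)) (f' x (y - x)) t := by
      simpa only [one_smul] using (hasDerivAt_id' t).smul_const (f' x (y - x))
    exact (((hf _ (hγ t ht)).comp_hasDerivAt t hγ').sub_const (f x)).sub hlin
  have hbound : ∀ t ∈ Ico (0 : ℝ) 1,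
      ‖f' (γ t) (y - x) - f' x (y - x)‖ ≤ C * ‖y - x‖ ^ 2 * t := by
    intro t ht
    calc ‖f' (γ t) (y - x) - f' x (y - x)‖ = ‖(f' (γ t) - f' x) (y - x)‖ := rfl
      _ ≤ ‖f' (γ t) - f' x‖ * ‖y - x‖ := ContinuousLinearMap.le_opNorm _ _
      _ ≤ C * ‖γ t - x‖ * ‖y - x‖ := by gcongr; exact hC _ (hγ t (Ico_subset_Icc_self ht))
      _ = C * ‖y - x‖ ^ 2 * t := by
        rw [show γ t - x = t • (y - x) by simp [γ], norm_smul, Real.norm_of_nonneg ht.1]; ring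
  have key := image_norm_le_of_norm_deriv_right_le_deriv_boundary
    (f := g) (a := 0) (b := 1) (B := fun t => C / 2 * ‖y - x‖ ^ 2 * t ^ 2)
    (fun t ht => (hg t ht).continuousAt.continuousWithinAt)
    (fun t ht => (hg t (Ico_subset_Icc_self ht)).hasDerivWithinAt)
    (by simp [g, γ]) (fun t => ((hasDerivAt_pow 2 t).const_mul _).congr_deriv (by ring))
    hbound (right_mem_Icc.2 zero_le_one)
  simpa [g, γ] using key

lemma newtonMap_equiv_comp (e : F ≃L[ℝ] G) (f : E → F) (f' : E → E →L[ℝ] F) :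
    newtonMap (e ∘ f) (fun x => (e : F →L[ℝ] G).comp (f' x)) = newtonMap f f' := by
  ext x
  simp [newtonMap]

lemma newtonMap_sub_self {f : E → F} {f' : E → E →L[ℝ] F} {x : E} :
    newtonMap f f' x - x = -(f' x).inverse (f x) := by
  simp [newtonMap]

lemma norm_image_newtonMap_le {f : E → F} {f' : E → E →L[ℝ] F} {x : E} {C : ℝ}
    (hx : (f' x).IsInvertible)
    (hf : ∀ z ∈ segment ℝ x (newtonMap f f' x), HasFDerivAt f (f' z) z)
    (hC : ∀ z ∈ segment ℝ x (newtonMap f f' x), ‖f' z - f' x‖ ≤ C * ‖z - x‖) :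
    ‖f (newtonMap f f' x)‖ ≤ C / 2 * ‖newtonMap f f' x - x‖ ^ 2 := by
  have hlin : f' x (newtonMap f f' x - x) = -f x := by
    rw [newtonMap_sub_self, map_neg, hx.self_apply_inverse]
  simpa [hlin] using norm_image_sub_sub_fderiv_le_of_norm_fderiv_sub_le hf hC

end Newton

section Kantorovich

variable {E : Type*} [NormedAddCommGroup E] [NormedSpace ℝ E] [CompleteSpace E]
  {g : E → E} {g' : E → E →L[ℝ] E} {z₀ : E} {κ α ρ : ℝ}

lemma newtonMap_isInvertible_and_norm_sub_le (hg₀ : g' z₀ = 1)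
    (hLip : ∀ x ∈ closedBall z₀ ρ, ∀ y ∈ closedBall z₀ ρ, ‖g' x - g' y‖ ≤ κ * ‖x - y‖)
    (hρ : IsKantorovichRoot κ α ρ) {x : E} {j : ℕ} (hx : ‖x - z₀‖ ≤ kantorovichSeq κ α j)
    (hgx : ‖g x‖ ≤ kantorovichPoly κ α (kantorovichSeq κ α j)) :
    (g' x).IsInvertible ∧
      ‖newtonMap g g' x - x‖ ≤ kantorovichSeq κ α (j + 1) - kantorovichSeq κ α j := by
  obtain ⟨hle, hlt⟩ := hρ.kantorovichSeq_le_and_mul_lt_one j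
  have hxB : x ∈ closedBall z₀ ρ := mem_closedBall_iff_norm.2 (hx.trans hle)
  have hpert : ‖g' x - 1‖ ≤ κ * kantorovichSeq κ α j := by
    rw [← hg₀]
    exact (hLip x hxB z₀ (mem_closedBall_self hρ.nonneg)).trans
      (mul_le_mul_of_nonneg_left hx hρ.coeff_nonneg)
  have hinv := ContinuousLinearMap.isInvertible_of_norm_sub_one_lt_one (hpert.trans_lt hlt)
  refine ⟨hinv, ?_⟩
  have hlower := (g' x).one_sub_norm_sub_one_mul_norm_le ((g' x).inverse (g x))
  rw [hinv.self_apply_inverse] at hlower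
  rw [newtonMap_sub_self, norm_neg]
  refine le_of_mul_le_mul_left ?_ (by linarith : 0 < 1 - κ * kantorovichSeq κ α j)
  calc (1 - κ * kantorovichSeq κ α j) * ‖(g' x).inverse (g x)‖
      ≤ (1 - ‖g' x - 1‖) * ‖(g' x).inverse (g x)‖ := by gcongr
    _ ≤ kantorovichPoly κ α (kantorovichSeq κ α j) := hlower.trans hgx
    _ = _ := by rw [kantorovichPoly_kantorovichSeq hlt, mul_comm]

lemma newtonMap_iterate_majorized (hg : ∀ x ∈ closedBall z₀ ρ, HasFDerivAt g (g' x) x)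
    (hg₀ : g' z₀ = 1)
    (hLip : ∀ x ∈ closedBall z₀ ρ, ∀ y ∈ closedBall z₀ ρ, ‖g' x - g' y‖ ≤ κ * ‖x - y‖)
    (hα : ‖g z₀‖ ≤ α) (hρ : IsKantorovichRoot κ α ρ) (j : ℕ) :
    ‖(newtonMap g g')^[j] z₀ - z₀‖ ≤ kantorovichSeq κ α j ∧
      ‖g ((newtonMap g g')^[j] z₀)‖ ≤ kantorovichPoly κ α (kantorovichSeq κ α j) := by
  induction j with
  | zero => simpa [kantorovichSeq, kantorovichPoly] using hα
  | succ j ih =>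
    obtain ⟨hx, hgx⟩ := ih
    obtain ⟨hinv, hstep⟩ := newtonMap_isInvertible_and_norm_sub_le hg₀ hLip hρ hx hgx
    have hscalar := hρ.kantorovichSeq_le_and_mul_lt_one
    rw [Function.iterate_succ_apply']
    set x := (newtonMap g g')^[j] z₀
    have hx' : ‖newtonMap g g' x - z₀‖ ≤ kantorovichSeq κ α (j + 1) := by
      linarith [norm_sub_le_norm_sub_add_norm_sub (newtonMap g g' x) x z₀]
    have hxB : x ∈ closedBall z₀ ρ := mem_closedBall_iff_norm.2 (hx.trans (hscalar j).1)
    have hseg : segment ℝ x (newtonMap g g' x) ⊆ closedBall z₀ ρ :=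
      (convex_closedBall z₀ ρ).segment_subset hxB
        (mem_closedBall_iff_norm.2 (hx'.trans (hscalar (j + 1)).1))
    refine ⟨hx', ?_⟩
    calc ‖g (newtonMap g g' x)‖ ≤ κ / 2 * ‖newtonMap g g' x - x‖ ^ 2 :=
          norm_image_newtonMap_le hinv (fun z hz => hg z (hseg hz))
            (fun z hz => hLip z (hseg hz) x hxB)
      _ ≤ κ / 2 * (kantorovichSeq κ α (j + 1) - kantorovichSeq κ α j) ^ 2 := by
          have := hρ.coeff_nonneg
          gcongr
      _ = _ := (kantorovichPoly_kantorovichSeq_succ (hscalar j).2).symm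

theorem newtonMap_iterate_tendsto_zero_of_fderiv_eq_one
    (hg : ∀ x ∈ closedBall z₀ ρ, HasFDerivAt g (g' x) x) (hg₀ : g' z₀ = 1)
    (hLip : ∀ x ∈ closedBall z₀ ρ, ∀ y ∈ closedBall z₀ ρ, ‖g' x - g' y‖ ≤ κ * ‖x - y‖)
    (hα : ‖g z₀‖ ≤ α) (hρ : IsKantorovichRoot κ α ρ) :
    (∀ j, (g' ((newtonMap g g')^[j] z₀)).IsInvertible) ∧
      (∀ j, (newtonMap g g')^[j] z₀ ∈ closedBall z₀ ρ) ∧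
      ∃ zs ∈ closedBall z₀ ρ, Tendsto (fun j => (newtonMap g g')^[j] z₀) atTop (𝓝 zs) ∧
        g zs = 0 := by
  have hmaj := newtonMap_iterate_majorized hg hg₀ hLip hα hρ
  have hstep j := newtonMap_isInvertible_and_norm_sub_le hg₀ hLip hρ (hmaj j).1 (hmaj j).2
  have hmem j : (newtonMap g g')^[j] z₀ ∈ closedBall z₀ ρ :=
    mem_closedBall_iff_norm.2 ((hmaj j).1.trans (hρ.kantorovichSeq_le_and_mul_lt_one j).1)
  have hsum := hρ.summable_kantorovichSeq_succ_sub
  obtain ⟨zs, hzs⟩ := cauchySeq_tendsto_of_complete <|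
    cauchySeq_of_dist_le_of_summable (f := fun j => (newtonMap g g')^[j] z₀) _
      (fun j => by rw [dist_comm, dist_eq_norm, Function.iterate_succ_apply']; exact (hstep j).2)
      hsum
  have hzsB : zs ∈ closedBall z₀ ρ := isClosed_closedBall.mem_of_tendsto hzs (.of_forall hmem)
  have hres : Tendsto (fun j => g ((newtonMap g g')^[j] z₀)) atTop (𝓝 0) :=
    squeeze_zero_norm (fun j => (hmaj j).2.trans (hρ.kantorovichPoly_kantorovichSeq_le j))
      hsum.tendsto_atTop_zero
  exact ⟨fun j => (hstep j).1, hmem, zs, hzsB, hzs,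
    tendsto_nhds_unique ((hg zs hzsB).continuousAt.tendsto.comp hzs) hres⟩

end Kantorovich

theorem stmt_14_general {X Y : Type*}
    [NormedAddCommGroup X] [NormedSpace ℝ X] [CompleteSpace X]
    [NormedAddCommGroup Y] [NormedSpace ℝ Y]
    (D : Set X)
    (F : X → Y) (F' : X → (X →L[ℝ] Y))
    (hF : ∀ z ∈ D, HasFDerivAt F (F' z) z)
    (z₀ : X)
    (e₀ : X ≃L[ℝ] Y) (he₀ : (e₀ : X →L[ℝ] Y) = F' z₀)
    (α κ₀ : ℝ) (hα : 0 ≤ α) (hκ₀ : 0 < κ₀)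
    (hbound : ‖e₀.symm (F z₀)‖ ≤ α)
    (hLip : ∀ z ∈ D, ∀ z' ∈ D,
      ‖(e₀.symm : Y →L[ℝ] X).comp (F' z - F' z')‖ ≤ κ₀ * ‖z - z'‖)
    (hh₀ : α * κ₀ ≤ 1 / 2)
    (hball : Metric.closedBall z₀ ((1 - Real.sqrt (1 - 2 * (α * κ₀))) / κ₀) ⊆ D) :
    ∃ z : ℕ → X, z 0 = z₀ ∧
      (∀ j, ∃ e : X ≃L[ℝ] Y, (e : X →L[ℝ] Y) = F' (z j) ∧
        z (j + 1) = z j - e.symm (F (z j))) ∧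
      (∀ j, z j ∈ Metric.closedBall z₀ ((1 - Real.sqrt (1 - 2 * (α * κ₀))) / κ₀)) ∧
      ∃ zstar ∈ Metric.closedBall z₀ ((1 - Real.sqrt (1 - 2 * (α * κ₀))) / κ₀),
        Filter.Tendsto z Filter.atTop (nhds zstar) ∧ F zstar = 0 := by
  set ρ := kantorovichRadius κ₀ α
  set g' : X → X →L[ℝ] X := fun x => (e₀.symm : Y →L[ℝ] X).comp (F' x)
  have hg : ∀ x ∈ closedBall z₀ ρ, HasFDerivAt (e₀.symm ∘ F) (g' x) x :=
    fun x hx => (e₀.symm : Y →L[ℝ] X).hasFDerivAt.comp x (hF x (hball hx))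
  have hg₀ : g' z₀ = 1 := by ext; simp [g', ← he₀]
  have hgLip : ∀ x ∈ closedBall z₀ ρ, ∀ y ∈ closedBall z₀ ρ, ‖g' x - g' y‖ ≤ κ₀ * ‖x - y‖ :=
    fun x hx y hy => by
      simpa [g', ContinuousLinearMap.comp_sub] using hLip x (hball hx) y (hball hy)
  obtain ⟨hinv, hmem, zs, hzsB, hzs, hgzs⟩ := newtonMap_iterate_tendsto_zero_of_fderiv_eq_one
    hg hg₀ hgLip hbound (isKantorovichRoot_kantorovichRadius hκ₀ hα hh₀)
  rw [newtonMap_equiv_comp] at hinv hmem hzs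
  refine ⟨fun j => (newtonMap F F')^[j] z₀, rfl, fun j => ?_, hmem, zs, hzsB, hzs,
    by simpa using hgzs⟩
  obtain ⟨e, he⟩ := ContinuousLinearMap.isInvertible_equiv_comp.1 (hinv j)
  exact ⟨e, he, (Function.iterate_succ_apply' _ _ _).trans <| by
    rw [newtonMap, ← he, ContinuousLinearMap.inverse_equiv]; rfl⟩

/-- Theorem 5.3, Newton–Kantorovich: let `X`, `Y` be real Banach spaces,
`D ⊆ X` open and convex, `F : X → Y` Fréchet differentiable on `D` with derivative `F'`,
`z₀ ∈ D` with `F'(z₀)` invertible with continuous inverse (given by the continuous linear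
equivalence `e₀`).  Assume `‖F'(z₀)⁻¹ F(z₀)‖ ≤ α`,
`‖F'(z₀)⁻¹ ∘ (F'(z) − F'(z̃))‖ ≤ κ₀ ‖z − z̃‖` on `D`, `h₀ := α κ₀ ≤ 1/2`, and that the
closed ball of radius `ρ = (1 − √(1 − 2h₀))/κ₀` around `z₀` lies in `D`.  Then the Newton
iterates starting at `z₀` are well defined, remain in that ball, and converge to a zero of
`F` in the ball. -/
theorem stmt_14 {X Y : Type*}
    [NormedAddCommGroup X] [NormedSpace ℝ X] [CompleteSpace X]
    [NormedAddCommGroup Y] [NormedSpace ℝ Y] [CompleteSpace Y]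
    (D : Set X) (hDopen : IsOpen D) (hDconv : Convex ℝ D)
    (F : X → Y) (F' : X → (X →L[ℝ] Y))
    (hF : ∀ z ∈ D, HasFDerivAt F (F' z) z)
    (z₀ : X) (hz₀ : z₀ ∈ D)
    (e₀ : X ≃L[ℝ] Y) (he₀ : (e₀ : X →L[ℝ] Y) = F' z₀)
    (α κ₀ : ℝ) (hα : 0 ≤ α) (hκ₀ : 0 < κ₀)
    (hbound : ‖e₀.symm (F z₀)‖ ≤ α)
    (hLip : ∀ z ∈ D, ∀ z' ∈ D,
      ‖(e₀.symm : Y →L[ℝ] X).comp (F' z - F' z')‖ ≤ κ₀ * ‖z - z'‖)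
    (hh₀ : α * κ₀ ≤ 1 / 2)
    (hball : Metric.closedBall z₀ ((1 - Real.sqrt (1 - 2 * (α * κ₀))) / κ₀) ⊆ D) :
    ∃ z : ℕ → X, z 0 = z₀ ∧
      (∀ j, ∃ e : X ≃L[ℝ] Y, (e : X →L[ℝ] Y) = F' (z j) ∧
        z (j + 1) = z j - e.symm (F (z j))) ∧
      (∀ j, z j ∈ Metric.closedBall z₀ ((1 - Real.sqrt (1 - 2 * (α * κ₀))) / κ₀)) ∧
      ∃ zstar ∈ Metric.closedBall z₀ ((1 - Real.sqrt (1 - 2 * (α * κ₀))) / κ₀),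
        Filter.Tendsto z Filter.atTop (nhds zstar) ∧ F zstar = 0 :=
  stmt_14_general D F F' hF z₀ e₀ he₀ α κ₀ hα hκ₀ hbound hLip hh₀ hball
end

section
/- Let V and X be complex Hilbert spaces with V* the topological dual of V, let R : V → X, 𝒜 : V → V*, and ℐ_α : V → V* be continuous linear maps, let L ∈ ℕ, ξ, η : Fin L → ℝ, and set Ξ := Σ_ℓ ξ_ℓ². Define I₂ : V → V* by ⟨I₂ u, v⟩ := (R u, R v)_X and, for p ∈ X, define Ī₂ p ∈ V* by ⟨Ī₂ p, v⟩ := (p, R v)_X. Let λ ∈ ℂ satisfy λ ≠ η_ℓ² for all ℓ, and let u ∈ V. Then the following are equivalent: (i) 𝒜 u + Ξ·I₂ u = λ·ℐ_α u + ( Σ_ℓ ξ_ℓ² η_ℓ² / (η_ℓ² − λ) )·I₂ u in V* (the nonlinear eigenvalue problem); (ii) there exists x : Fin L → X such that 𝒜 u + Ξ·I₂ u − Ī₂( Σ_ℓ (ξ_ℓ η_ℓ)·x_ℓ ) = λ·ℐ_α u in V* and η_ℓ²·x_ℓ − (ξ_ℓ η_ℓ)·R u = λ·x_ℓ in X for every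 ℓ (the linearized eigenvalue problem). Moreover, in (ii) the auxiliary variable is uniquely determined as x_ℓ = (ξ_ℓ η_ℓ / (η_ℓ² − λ))·R u. -/
/-!
Since `λ ≠ η_ℓ²`, the auxiliary equation `η_ℓ² x_ℓ − ξ_ℓ η_ℓ R u = λ x_ℓ` has the unique
solution `x_ℓ = ξ_ℓ η_ℓ / (η_ℓ² − λ) · R u`. Substituting it into the first equation of the
linearized problem turns `Ī₂ (Σ_ℓ ξ_ℓ η_ℓ x_ℓ)` into `(Σ_ℓ ξ_ℓ² η_ℓ² / (η_ℓ² − λ)) · I₂ u`, which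
is exactly the nonlinear problem.
-/

theorem smul_sub_smul_eq_smul_iff {𝕜 M : Type*} [Field 𝕜] [AddCommGroup M] [Module 𝕜 M]
    {a b lam : 𝕜} (h : a ≠ lam) (x y : M) :
    a • x - b • y = lam • x ↔ x = (b / (a - lam)) • y := by
  rw [div_eq_inv_mul, mul_smul, eq_inv_smul_iff₀ (sub_ne_zero.mpr h), sub_smul,
    sub_eq_iff_eq_add, sub_eq_iff_eq_add', add_comm]

theorem inner_sum_smul_smul_right {𝕜 E ι : Type*} [RCLike 𝕜] [SeminormedAddCommGroup E]
    [InnerProductSpace 𝕜 E] (s : Finset ι) (c d : ι → 𝕜) (w z : E) :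
    inner 𝕜 w (∑ i ∈ s, c i • d i • z) = (∑ i ∈ s, c i * d i) * inner 𝕜 w z := by
  simp only [smul_smul, ← Finset.sum_smul, inner_smul_right]

theorem stmt_15_general {V X : Type*}
    [NormedAddCommGroup V] [InnerProductSpace ℂ V]
    [NormedAddCommGroup X] [InnerProductSpace ℂ X]
    (R : V →L[ℂ] X) (A Iα : V →L[ℂ] (V →L[ℂ] ℂ))
    (L : ℕ) (ξ η : Fin L → ℝ)
    (lam : ℂ) (hlam : ∀ ℓ, lam ≠ ((η ℓ : ℂ)) ^ 2) (u : V) :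
    ((∀ v : V,
        A u v + ((∑ ℓ, (ξ ℓ) ^ 2 : ℝ) : ℂ) * (inner ℂ (R v) (R u) : ℂ) =
          lam * Iα u v +
            (∑ ℓ, ((ξ ℓ : ℂ)) ^ 2 * ((η ℓ : ℂ)) ^ 2 / (((η ℓ : ℂ)) ^ 2 - lam)) *
              (inner ℂ (R v) (R u) : ℂ)) ↔
      (∃ x : Fin L → X,
        (∀ v : V,
          A u v + ((∑ ℓ, (ξ ℓ) ^ 2 : ℝ) : ℂ) * (inner ℂ (R v) (R u) : ℂ) -
              (inner ℂ (R v) (∑ ℓ, ((ξ ℓ * η ℓ : ℝ) : ℂ) • x ℓ) : ℂ) =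
            lam * Iα u v) ∧
        (∀ ℓ, ((η ℓ : ℂ)) ^ 2 • x ℓ - ((ξ ℓ * η ℓ : ℝ) : ℂ) • R u = lam • x ℓ))) ∧
      (∀ x : Fin L → X,
        ((∀ v : V,
          A u v + ((∑ ℓ, (ξ ℓ) ^ 2 : ℝ) : ℂ) * (inner ℂ (R v) (R u) : ℂ) -
              (inner ℂ (R v) (∑ ℓ, ((ξ ℓ * η ℓ : ℝ) : ℂ) • x ℓ) : ℂ) =
            lam * Iα u v) ∧
          (∀ ℓ, ((η ℓ : ℂ)) ^ 2 • x ℓ - ((ξ ℓ * η ℓ : ℝ) : ℂ) • R u = lam • x ℓ)) →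
        ∀ ℓ, x ℓ = (((ξ ℓ * η ℓ : ℝ) : ℂ) / (((η ℓ : ℂ)) ^ 2 - lam)) • R u) := by
  set x₀ : Fin L → X := fun ℓ => (((ξ ℓ * η ℓ : ℝ) : ℂ) / (((η ℓ : ℂ)) ^ 2 - lam)) • R u
  have aux_iff : ∀ x : Fin L → X,
      (∀ ℓ, ((η ℓ : ℂ)) ^ 2 • x ℓ - ((ξ ℓ * η ℓ : ℝ) : ℂ) • R u = lam • x ℓ) ↔ x = x₀ :=
    fun x => (forall_congr' fun ℓ => smul_sub_smul_eq_smul_iff (hlam ℓ).symm _ _).trans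
      funext_iff.symm
  have coupling : ∀ v : V, inner ℂ (R v) (∑ ℓ, ((ξ ℓ * η ℓ : ℝ) : ℂ) • x₀ ℓ) =
      (∑ ℓ, ((ξ ℓ : ℂ)) ^ 2 * ((η ℓ : ℂ)) ^ 2 / (((η ℓ : ℂ)) ^ 2 - lam)) *
        inner ℂ (R v) (R u) := by
    intro v
    rw [inner_sum_smul_smul_right]
    congr 1
    refine Finset.sum_congr rfl fun ℓ _ => ?_
    push_cast
    ring
  refine ⟨?_, fun x hx => funext_iff.mp ((aux_iff x).mp hx.2)⟩
  simp only [aux_iff, exists_eq_right]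
  simp only [coupling, sub_eq_iff_eq_add]

/-- Lemma 4.5, equivalence of the nonlinear and the linearized eigenvalue
problems: `V`, `X` complex Hilbert spaces, `R : V → X`, `𝒜, ℐ_α : V → V*` continuous
linear, `Ξ = Σ ξ_ℓ²`, and `λ ≠ η_ℓ²` for all `ℓ`.  The pairings are written against test
functions `v ∈ V`: `⟨I₂ u, v⟩ = (R u, R v)_X` and `⟨Ī₂ p, v⟩ = (p, R v)_X`, where
`(p, q)_X` (linear in the first argument) is `inner (R v) p` in Mathlib's convention.
Then the nonlinear eigenvalue problem (i) is equivalent to the linearized problem (ii),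
and in (ii) the auxiliary variable is uniquely `x_ℓ = (ξ_ℓ η_ℓ/(η_ℓ² − λ)) R u`. -/
theorem stmt_15 {V X : Type*}
    [NormedAddCommGroup V] [InnerProductSpace ℂ V] [CompleteSpace V]
    [NormedAddCommGroup X] [InnerProductSpace ℂ X] [CompleteSpace X]
    (R : V →L[ℂ] X) (A Iα : V →L[ℂ] (V →L[ℂ] ℂ))
    (L : ℕ) (ξ η : Fin L → ℝ)
    (lam : ℂ) (hlam : ∀ ℓ, lam ≠ ((η ℓ : ℂ)) ^ 2) (u : V) :
    ((∀ v : V,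
        A u v + ((∑ ℓ, (ξ ℓ) ^ 2 : ℝ) : ℂ) * (inner ℂ (R v) (R u) : ℂ) =
          lam * Iα u v +
            (∑ ℓ, ((ξ ℓ : ℂ)) ^ 2 * ((η ℓ : ℂ)) ^ 2 / (((η ℓ : ℂ)) ^ 2 - lam)) *
              (inner ℂ (R v) (R u) : ℂ)) ↔
      (∃ x : Fin L → X,
        (∀ v : V,
          A u v + ((∑ ℓ, (ξ ℓ) ^ 2 : ℝ) : ℂ) * (inner ℂ (R v) (R u) : ℂ) -
              (inner ℂ (R v) (∑ ℓ, ((ξ ℓ * η ℓ : ℝ) : ℂ) • x ℓ) : ℂ) =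
            lam * Iα u v) ∧
        (∀ ℓ, ((η ℓ : ℂ)) ^ 2 • x ℓ - ((ξ ℓ * η ℓ : ℝ) : ℂ) • R u = lam • x ℓ))) ∧
      (∀ x : Fin L → X,
        ((∀ v : V,
          A u v + ((∑ ℓ, (ξ ℓ) ^ 2 : ℝ) : ℂ) * (inner ℂ (R v) (R u) : ℂ) -
              (inner ℂ (R v) (∑ ℓ, ((ξ ℓ * η ℓ : ℝ) : ℂ) • x ℓ) : ℂ) =
            lam * Iα u v) ∧
          (∀ ℓ, ((η ℓ : ℂ)) ^ 2 • x ℓ - ((ξ ℓ * η ℓ : ℝ) : ℂ) • R u = lam • x ℓ)) →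
        ∀ ℓ, x ℓ = (((ξ ℓ * η ℓ : ℝ) : ℂ) / (((η ℓ : ℂ)) ^ 2 - lam)) • R u) :=
  stmt_15_general R A Iα L ξ η lam hlam u
end
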